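/- arXiv:1604.06618 — 3 statements merged into one kernel-verified Lean document; each statement's English description precedes it below -/
import Mathlib

section
/- If Q is an (N+1)×(N+1) real matrix whose rows each sum to zero, then for any vectors a, b ∈ ℝ^{N+1}, 2·∑_{m=0}^{N} Q_{im}·((a_i+a_m)/2)·((b_i+b_m)/2) = (1/2)·( ∑_{m=0}^{N} Q_{im}·a_m·b_m + a_i·∑_{m=0}^{N} Q_{im}·b_m + b_i·∑_{m=0}^{N} Q_{im}·a_m ) for every i. That is, the two-point arithmetic-mean product volume flux generates the quadratic split form (a b)_x = ½(a b)_x + ½(a_x b + a b_x) discretely. -/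
open Finset

theorem sum_mul_add_mul_add_of_sum_eq_zero {ι R : Type*} [CommRing R] (s : Finset ι)
    (q a b : ι → R) (x y : R) (hq : ∑ m ∈ s, q m = 0) :
    ∑ m ∈ s, q m * (x + a m) * (y + b m) =
      ∑ m ∈ s, q m * a m * b m + x * ∑ m ∈ s, q m * b m + y * ∑ m ∈ s, q m * a m := by
  have expand : ∀ m, q m * (x + a m) * (y + b m) =
      x * y * q m + (q m * a m * b m + x * (q m * b m) + y * (q m * a m)) := fun m => by ring
  simp only [expand, sum_add_distrib, ← mul_sum, hq, mul_zero, zero_add]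

theorem split_form_quadratic (N : ℕ) (Q : Matrix (Fin (N+1)) (Fin (N+1)) ℝ)
    (hQ : ∀ i, ∑ m, Q i m = 0) (a b : Fin (N+1) → ℝ) (i : Fin (N+1)) :
    2 * ∑ m, Q i m * ((a i + a m) / 2) * ((b i + b m) / 2) =
      (1/2) * ((∑ m, Q i m * a m * b m) + a i * (∑ m, Q i m * b m)
        + b i * (∑ m, Q i m * a m)) := by
  have halve : ∀ m, Q i m * ((a i + a m) / 2) * ((b i + b m) / 2) =
      1 / 4 * (Q i m * (a i + a m) * (b i + b m)) := fun m => by ring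
  rw [sum_congr rfl fun m _ => halve m, ← mul_sum,
    sum_mul_add_mul_add_of_sum_eq_zero _ _ _ _ _ _ (hQ i)]
  ring
end

section
/- If Q is an (N+1)×(N+1) real matrix whose rows each sum to zero, then for any vectors a, b, c ∈ ℝ^{N+1}, 2·∑_{m=0}^{N} Q_{im}·((a_i+a_m)/2)·((b_i+b_m)/2)·((c_i+c_m)/2) = (1/4)·( ∑_m Q_{im} a_m b_m c_m + a_i ∑_m Q_{im} b_m c_m + b_i ∑_m Q_{im} a_m c_m + c_i ∑_m Q_{im} a_m b_m + b_i c_i ∑_m Q_{im} a_m + a_i c_i ∑_m Q_{im} b_m + a_i b_i ∑_m Q_{im} c_m ) for every i. That is, the triple arithmetic-mean product volume flux generates the Kennedy–Gruber cubic split form discretely. -/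
/-!
Each average is half a sum, so the flux is `1/4 ∑ₘ Q i m (aᵢ + aₘ)(bᵢ + bₘ)(cᵢ + cₘ)`. Expanding the
product gives eight terms; seven of them are the split form, and the eighth, `aᵢ bᵢ cᵢ ∑ₘ Q i m`,
vanishes because the rows of `Q` sum to zero.
-/

open Finset

theorem sum_mul_add_mul_add_mul_add_of_sum_eq_zero {ι R : Type*} [Fintype ι] [CommSemiring R]
    {q : ι → R} (hq : ∑ m, q m = 0) (a b c : ι → R) (x y z : R) :
    ∑ m, q m * (x + a m) * (y + b m) * (z + c m) =
      (∑ m, q m * a m * b m * c m)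
        + x * (∑ m, q m * b m * c m)
        + y * (∑ m, q m * a m * c m)
        + z * (∑ m, q m * a m * b m)
        + y * z * (∑ m, q m * a m)
        + x * z * (∑ m, q m * b m)
        + x * y * (∑ m, q m * c m) := by
  calc ∑ m, q m * (x + a m) * (y + b m) * (z + c m)
      = ∑ m, (q m * a m * b m * c m + x * (q m * b m * c m) + y * (q m * a m * c m)
          + z * (q m * a m * b m) + y * z * (q m * a m) + x * z * (q m * b m)
          + x * y * (q m * c m) + x * y * z * q m) :=
        sum_congr rfl fun m _ => by ring
    _ = (∑ m, q m * a m * b m * c m) + x * (∑ m, q m * b m * c m)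
          + y * (∑ m, q m * a m * c m) + z * (∑ m, q m * a m * b m)
          + y * z * (∑ m, q m * a m) + x * z * (∑ m, q m * b m)
          + x * y * (∑ m, q m * c m) + x * y * z * (∑ m, q m) := by
        simp only [sum_add_distrib, ← mul_sum]
    _ = _ := by rw [hq, mul_zero, add_zero]

theorem split_form_cubic (N : ℕ) (Q : Matrix (Fin (N+1)) (Fin (N+1)) ℝ)
    (hQ : ∀ i, ∑ m, Q i m = 0) (a b c : Fin (N+1) → ℝ) (i : Fin (N+1)) :
    2 * ∑ m, Q i m * ((a i + a m) / 2) * ((b i + b m) / 2) * ((c i + c m) / 2) =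
      (1/4) * ((∑ m, Q i m * a m * b m * c m)
        + a i * (∑ m, Q i m * b m * c m)
        + b i * (∑ m, Q i m * a m * c m)
        + c i * (∑ m, Q i m * a m * b m)
        + b i * c i * (∑ m, Q i m * a m)
        + a i * c i * (∑ m, Q i m * b m)
        + a i * b i * (∑ m, Q i m * c m)) := by
  have halve : ∀ m, Q i m * ((a i + a m) / 2) * ((b i + b m) / 2) * ((c i + c m) / 2) =
      (1/8) * (Q i m * (a i + a m) * (b i + b m) * (c i + c m)) := fun m => by ring
  rw [sum_congr rfl fun m _ => halve m, ← mul_sum,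
    sum_mul_add_mul_add_mul_add_of_sum_eq_zero (hQ i)]
  ring
end

section
/- Let D satisfy the SBP property (Q = M·D, Q + Qᵀ = B = diag(−1,0,...,0,1), M = diag(ω) with ω_i > 0) and suppose the two-point numerical volume flux for the momentum equations has the Jameson structure F^{#,2} = F^{#,1}⟨u⟩ + p̃, F^{#,3} = F^{#,1}⟨v⟩, F^{#,4} = F^{#,1}⟨w⟩, with p̃ symmetric and consistent. Then the discrete kinetic-energy time derivative at node i, defined by (κ_t)_i = −((u_i²+v_i²+w_i²)/2)(ρ_t)_i + u_i(ρu)_t,i + v_i(ρv)_t,i + w_i(ρw)_t,i with the flux-differencing volume terms, equals −2∑_m D_{im}·f^{#,κ}(U_i,U_m) − 2u_i∑_m D_{im} p̃(U_i,U_m), where f^{#,κ}(U_i,U_m) = ½F^{#,1}(U_i,U_m)(u_i u_m + v_i v_m + w_i w_m) is a symmetric, consistent two-point flux for the kinetic energy (stated in one space dimension with velocity components u,v,w). -/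
/-! The kinetic-energy derivative is the contraction of the mass and momentum derivatives with
`(-|𝐯_i|²/2, 𝐯_i)`. Every volume term is a two-point flux weighted by `D i m`, so the contraction
can be done pair by pair, where `-|a|²/2 + a · (a + b)/2 = a · b/2` turns the Jameson momentum flux
into the kinetic-energy flux plus the pressure work. -/

lemma kinetic_contraction_two_point (F P ui um vi vm wi wm : ℝ) :
    -((ui ^ 2 + vi ^ 2 + wi ^ 2) / 2) * F + ui * (F * ((ui + um) / 2) + P)
        + vi * (F * ((vi + vm) / 2)) + wi * (F * ((wi + wm) / 2)) =
      1 / 2 * F * (ui * um + vi * vm + wi * wm) + ui * P := by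
  ring

theorem discrete_kinetic_energy_preservation_general (N : ℕ)
    (D : Matrix (Fin (N+1)) (Fin (N+1)) ℝ)
    -- nodal primitive values and two-point fluxes
    (u v w : Fin (N+1) → ℝ)
    (F1 ptilde : Fin (N+1) → Fin (N+1) → ℝ)
    (hF1sym : ∀ i m, F1 i m = F1 m i)
    -- flux-differencing time derivatives with the Jameson flux structure
    (ρt ρut ρvt ρwt : Fin (N+1) → ℝ)
    (hρt : ∀ i, ρt i = -2 * ∑ m, D i m * F1 i m)
    (hρut : ∀ i, ρut i = -2 * ∑ m, D i m * (F1 i m * ((u i + u m) / 2) + ptilde i m))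
    (hρvt : ∀ i, ρvt i = -2 * ∑ m, D i m * (F1 i m * ((v i + v m) / 2)))
    (hρwt : ∀ i, ρwt i = -2 * ∑ m, D i m * (F1 i m * ((w i + w m) / 2)))
    -- the two-point kinetic energy flux
    (fκ : Fin (N+1) → Fin (N+1) → ℝ)
    (hfκ : ∀ i m, fκ i m = (1/2) * F1 i m * (u i * u m + v i * v m + w i * w m)) :
    -- fκ is symmetric and consistent, and the discrete kinetic-energy time
    -- derivative has flux-differencing form plus the pressure work
    (∀ i m, fκ i m = fκ m i) ∧
    (∀ i, fκ i i = F1 i i * (u i ^ 2 + v i ^ 2 + w i ^ 2) / 2) ∧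
    (∀ i, -((u i ^ 2 + v i ^ 2 + w i ^ 2) / 2) * ρt i
        + u i * ρut i + v i * ρvt i + w i * ρwt i =
      -2 * (∑ m, D i m * fκ i m) - 2 * u i * ∑ m, D i m * ptilde i m) := by
  refine ⟨fun i m => ?_, fun i => ?_, fun i => ?_⟩
  · rw [hfκ, hfκ, hF1sym i m]
    ring
  · rw [hfκ]
    ring
  · rw [hρt, hρut, hρvt, hρwt]
    simp only [Finset.mul_sum, ← Finset.sum_add_distrib, ← Finset.sum_sub_distrib]
    refine Finset.sum_congr rfl fun m _ => ?_
    rw [hfκ]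
    linear_combination (-2 * D i m) *
      kinetic_contraction_two_point (F1 i m) (ptilde i m) (u i) (u m) (v i) (v m) (w i) (w m)

theorem discrete_kinetic_energy_preservation (N : ℕ)
    (ω : Fin (N+1) → ℝ) (hω : ∀ i, 0 < ω i)
    (D Q : Matrix (Fin (N+1)) (Fin (N+1)) ℝ)
    (hQdef : Q = Matrix.diagonal ω * D)
    (hSBP : Q + Q.transpose =
      Matrix.diagonal (fun i => if i = (0 : Fin (N+1)) then (-1 : ℝ)
        else if i = Fin.last N then 1 else 0))
    -- nodal primitive values and two-point fluxes
    (ρ u v w p : Fin (N+1) → ℝ)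
    (F1 ptilde : Fin (N+1) → Fin (N+1) → ℝ)
    (hF1sym : ∀ i m, F1 i m = F1 m i)
    (hpsym : ∀ i m, ptilde i m = ptilde m i)
    (hpcons : ∀ i, ptilde i i = p i)
    -- flux-differencing time derivatives with the Jameson flux structure
    (ρt ρut ρvt ρwt : Fin (N+1) → ℝ)
    (hρt : ∀ i, ρt i = -2 * ∑ m, D i m * F1 i m)
    (hρut : ∀ i, ρut i = -2 * ∑ m, D i m * (F1 i m * ((u i + u m) / 2) + ptilde i m))
    (hρvt : ∀ i, ρvt i = -2 * ∑ m, D i m * (F1 i m * ((v i + v m) / 2)))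
    (hρwt : ∀ i, ρwt i = -2 * ∑ m, D i m * (F1 i m * ((w i + w m) / 2)))
    -- the two-point kinetic energy flux
    (fκ : Fin (N+1) → Fin (N+1) → ℝ)
    (hfκ : ∀ i m, fκ i m = (1/2) * F1 i m * (u i * u m + v i * v m + w i * w m)) :
    -- fκ is symmetric and consistent, and the discrete kinetic-energy time
    -- derivative has flux-differencing form plus the pressure work
    (∀ i m, fκ i m = fκ m i) ∧
    (∀ i, fκ i i = F1 i i * (u i ^ 2 + v i ^ 2 + w i ^ 2) / 2) ∧
    (∀ i, -((u i ^ 2 + v i ^ 2 + w i ^ 2) / 2) * ρt i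
        + u i * ρut i + v i * ρvt i + w i * ρwt i =
      -2 * (∑ m, D i m * fκ i m) - 2 * u i * ∑ m, D i m * ptilde i m) :=
  discrete_kinetic_energy_preservation_general N D u v w F1 ptilde hF1sym ρt ρut ρvt ρwt hρt hρut
    hρvt hρwt fκ hfκ
end
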